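/- Let k < p be positive integers, B a k×k skew-symmetric matrix, A a (p−k)×k real matrix, X = [[B, −Aᵀ],[A, 0]], and Q = C(X) with top k×k block Q₁ and bottom block Q₂. Then I_k + Q₁ is invertible, and setting F = (I_k − Q₁)(I_k + Q₁)⁻¹ one recovers B = ½(Fᵀ − F) and A = ½ Q₂ (I_k + F). In particular, the Cayley transform is injective on the set of block matrices of this form. -/

import Mathlib

open Matrix MeasureTheory Filter
open scoped Kronecker ENNReal

noncomputable section

/-- The `p × k` matrix whose top `k × k` block is the identity and whose
remaining entries are zero. -/
def Ipk (p k : ℕ) : Matrix (Fin p) (Fin k) ℝ :=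
  Matrix.of fun i j => if (i : ℕ) = (j : ℕ) then 1 else 0

/-- The (modified) Cayley transform `C(X) = (I + X)(I - X)⁻¹ I_{p×k}`. -/
def cayley (p k : ℕ) (X : Matrix (Fin p) (Fin p) ℝ) : Matrix (Fin p) (Fin k) ℝ :=
  (1 + X) * (1 - X)⁻¹ * Ipk p k

/-- Top `k × k` block of a `p × k` matrix. -/
def topBlock {p k : ℕ} (h : k ≤ p) (Q : Matrix (Fin p) (Fin k) ℝ) :
    Matrix (Fin k) (Fin k) ℝ :=
  Q.submatrix (Fin.castLE h) id

/-- Bottom `(p-k) × k` block of a `p × k` matrix. -/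
def botBlock {p k : ℕ} (h : k ≤ p) (Q : Matrix (Fin p) (Fin k) ℝ) :
    Matrix (Fin (p - k)) (Fin k) ℝ :=
  Q.submatrix (fun i => ⟨k + i.1, by have := i.isLt; omega⟩) id

/-- The skew-symmetric block matrix `[[B, -Aᵀ], [A, 0]]` as a `p × p` matrix. -/
def blockX {p k : ℕ} (h : k ≤ p) (B : Matrix (Fin k) (Fin k) ℝ)
    (A : Matrix (Fin (p - k)) (Fin k) ℝ) : Matrix (Fin p) (Fin p) ℝ :=
  (Matrix.fromBlocks B (-Aᵀ) A 0).submatrix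
    (fun i => finSumFinEquiv.symm (Fin.cast (by omega) i))
    (fun j => finSumFinEquiv.symm (Fin.cast (by omega) j))

/-- Position of the strictly subdiagonal entry `(i, j)` (`j < i`) of a `k × k`
matrix in the column-major enumeration of the strictly subdiagonal entries. -/
def lowIdx (k i j : ℕ) : ℕ := j * k + i - (j + 1) * (j + 2) / 2

/-- The `k × k` skew-symmetric matrix whose strictly subdiagonal entries, in
column-major order, are given by `b`. -/
def skewOfVec (k : ℕ) (b : Fin (k * (k - 1) / 2) → ℝ) : Matrix (Fin k) (Fin k) ℝ :=
  Matrix.of fun i j =>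
    if (j : ℕ) < (i : ℕ) then
      if h : lowIdx k i j < k * (k - 1) / 2 then b ⟨lowIdx k i j, h⟩ else 0
    else if (i : ℕ) < (j : ℕ) then
      if h : lowIdx k j i < k * (k - 1) / 2 then -b ⟨lowIdx k j i, h⟩ else 0
    else 0

/-- The vector of strictly subdiagonal entries of a `k × k` matrix, in
column-major order. -/
def subdiagVec {k : ℕ} (M : Matrix (Fin k) (Fin k) ℝ) : Fin (k * (k - 1) / 2) → ℝ :=
  fun t => ∑ i : Fin k, ∑ j : Fin k,
    if (j : ℕ) < (i : ℕ) ∧ lowIdx k (i : ℕ) (j : ℕ) = (t : ℕ) then M i j else 0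

/-- Column-major vectorization of an `a × b` matrix, indexed by
(column, row) pairs. -/
def vecP {a b : ℕ} (M : Matrix (Fin a) (Fin b) ℝ) : Fin b × Fin a → ℝ :=
  fun q => M q.2 q.1

/-- The max-norm of a matrix: the maximum of the absolute values of its
entries. -/
def maxNorm {a b : ℕ} (M : Matrix (Fin a) (Fin b) ℝ) : ℝ :=
  ⨆ q : Fin a × Fin b, |M q.1 q.2|

/-- The Frobenius norm of a matrix. -/
def frobNorm {a b : ℕ} (M : Matrix (Fin a) (Fin b) ℝ) : ℝ :=
  Real.sqrt (∑ i, ∑ j, (M i j) ^ 2)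

/-!
Write `W = 1 - B + AᵀA`. Solving `(I - X) Z = I_{p×k}` blockwise gives `Z = [W⁻¹; A W⁻¹]`,
and since `(I + X)(I - X)⁻¹ = 2(I - X)⁻¹ - I`, the blocks of the Cayley transform are
`Q₁ = 2W⁻¹ - I` and `Q₂ = 2AW⁻¹`. Both `I - X` and `W` are invertible because their symmetric
parts, `I` and `I + AᵀA`, are positive definite. Hence `I + Q₁ = 2W⁻¹` is invertible,
`F = W - I = AᵀA - B` has skew part `-B`, and `Q₂ (I + F) = 2A`.
-/

section SkewSymmetric

variable {R n m : Type*} [Fintype n] [Fintype m]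

theorem dotProduct_mulVec_eq_zero_of_transpose_eq_neg [CommRing R] [LinearOrder R]
    [IsStrictOrderedRing R] {B : Matrix n n R} (hB : Bᵀ = -B) (v : n → R) :
    v ⬝ᵥ (B *ᵥ v) = 0 := by
  have h : v ⬝ᵥ (B *ᵥ v) = -(v ⬝ᵥ (B *ᵥ v)) := by
    conv_lhs => rw [dotProduct_mulVec, ← mulVec_transpose, hB, neg_mulVec, neg_dotProduct,
      dotProduct_comm]
  linarith

theorem isUnit_one_sub_add_transpose_mul [Field R] [LinearOrder R] [IsStrictOrderedRing R]
    [DecidableEq n] {B : Matrix n n R} (hB : Bᵀ = -B) (A : Matrix m n R) :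
    IsUnit (1 - B + Aᵀ * A) := by
  rw [isUnit_iff_isUnit_det, isUnit_iff_ne_zero]
  intro hdet
  obtain ⟨v, hv, hWv⟩ := exists_mulVec_eq_zero_iff.mpr hdet
  have hquad : v ⬝ᵥ v + (A *ᵥ v) ⬝ᵥ (A *ᵥ v) = 0 := by
    have := congrArg (v ⬝ᵥ ·) hWv
    simp only [add_mulVec, sub_mulVec, one_mulVec, ← mulVec_mulVec, dotProduct_add,
      dotProduct_sub, dotProduct_zero, dotProduct_mulVec v Aᵀ, vecMul_transpose,
      dotProduct_mulVec_eq_zero_of_transpose_eq_neg hB] at this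
    rw [dotProduct_comm (A *ᵥ v)] at this
    linarith
  have hv_sq : 0 ≤ v ⬝ᵥ v := Finset.sum_nonneg fun i _ => mul_self_nonneg (v i)
  have hAv_sq : 0 ≤ (A *ᵥ v) ⬝ᵥ (A *ᵥ v) := Finset.sum_nonneg fun i _ => mul_self_nonneg _
  exact hv (dotProduct_self_eq_zero.mp (by linarith))

theorem isUnit_one_sub_of_transpose_eq_neg [Field R] [LinearOrder R] [IsStrictOrderedRing R]
    [DecidableEq n] {X : Matrix n n R} (hX : Xᵀ = -X) : IsUnit (1 - X) := by
  simpa using isUnit_one_sub_add_transpose_mul hX (0 : Matrix n n R)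

end SkewSymmetric

section CayleyTransform

variable {R n m l : Type*} [Fintype n] [Fintype m] [DecidableEq n] [DecidableEq m]

theorem one_add_mul_one_sub_inv_mul [CommRing R] (X : Matrix n n R) (E : Matrix n l R)
    (hX : IsUnit (1 - X).det) :
    (1 + X) * (1 - X)⁻¹ * E = (2 : R) • ((1 - X)⁻¹ * E) - E := by
  have h : 1 + X = (2 : R) • 1 - (1 - X) := by module
  rw [h, sub_mul, smul_mul, one_mul, mul_nonsing_inv _ hX, Matrix.sub_mul, Matrix.smul_mul,
    Matrix.one_mul]

theorem one_add_submatrix_mul_inv_mul [CommRing R] {ι κ : Type*} [Fintype ι] [DecidableEq ι]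
    [Fintype κ] [DecidableEq κ] (e : ι ≃ κ) (X : Matrix κ κ R) (E : Matrix κ l R) :
    (1 + X.submatrix e e) * (1 - X.submatrix e e)⁻¹ * E.submatrix e id
      = ((1 + X) * (1 - X)⁻¹ * E).submatrix e id := by
  have hadd : 1 + X.submatrix e e = (1 + X).submatrix e e := by
    rw [← submatrix_one_equiv e]; rfl
  have hsub : 1 - X.submatrix e e = (1 - X).submatrix e e := by
    rw [← submatrix_one_equiv e]; rfl
  rw [hadd, hsub, inv_submatrix_equiv, submatrix_mul_equiv, submatrix_mul_equiv]

theorem one_sub_fromBlocks_mul_fromRows [CommRing R] (B : Matrix n n R) (A : Matrix m n R)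
    (Z : Matrix n l R) :
    (1 - fromBlocks B (-Aᵀ) A 0) * fromRows Z (A * Z) = fromRows ((1 - B + Aᵀ * A) * Z) 0 := by
  rw [← fromBlocks_one, sub_eq_add_neg, fromBlocks_neg, fromBlocks_add, fromBlocks_mul_fromRows]
  congr 1
  · simp only [zero_add, neg_neg, ← sub_eq_add_neg, Matrix.add_mul, Matrix.mul_assoc]
  · simp

theorem cayley_fromBlocks_fromRows [Field R] [LinearOrder R] [IsStrictOrderedRing R]
    {B : Matrix n n R} (hB : Bᵀ = -B) (A : Matrix m n R) :
    (1 + fromBlocks B (-Aᵀ) A 0) * (1 - fromBlocks B (-Aᵀ) A 0)⁻¹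
        * fromRows (1 : Matrix n n R) (0 : Matrix m n R)
      = fromRows ((2 : R) • (1 - B + Aᵀ * A)⁻¹ - 1) ((2 : R) • (A * (1 - B + Aᵀ * A)⁻¹)) := by
  set Y := fromBlocks B (-Aᵀ) A 0
  have hY : IsUnit (1 - Y).det := by
    refine (isUnit_iff_isUnit_det _).mp (isUnit_one_sub_of_transpose_eq_neg ?_)
    simp [Y, fromBlocks_transpose, fromBlocks_neg, hB]
  have hW : IsUnit (1 - B + Aᵀ * A).det :=
    (isUnit_iff_isUnit_det _).mp (isUnit_one_sub_add_transpose_mul hB A)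
  have hsolve : (1 - Y)⁻¹ * fromRows (1 : Matrix n n R) (0 : Matrix m n R)
      = fromRows (1 - B + Aᵀ * A)⁻¹ (A * (1 - B + Aᵀ * A)⁻¹) := by
    calc (1 - Y)⁻¹ * fromRows (1 : Matrix n n R) (0 : Matrix m n R)
        = (1 - Y)⁻¹ * ((1 - Y) * fromRows (1 - B + Aᵀ * A)⁻¹ (A * (1 - B + Aᵀ * A)⁻¹)) := by
          rw [one_sub_fromBlocks_mul_fromRows, mul_nonsing_inv _ hW]
      _ = _ := nonsing_inv_mul_cancel_left _ _ hY
  rw [one_add_mul_one_sub_inv_mul _ _ hY, hsolve]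
  ext (i | i) j <;> simp

end CayleyTransform

section Reindex

variable {p k : ℕ}

def finSumSubEquiv (h : k ≤ p) : Fin p ≃ Fin k ⊕ Fin (p - k) :=
  (finCongr (by omega)).trans finSumFinEquiv.symm

@[simp]
theorem finSumSubEquiv_symm_inl (h : k ≤ p) (i : Fin k) :
    ((finSumSubEquiv h).symm (Sum.inl i) : ℕ) = i := by
  simp [finSumSubEquiv]

@[simp]
theorem finSumSubEquiv_symm_inr (h : k ≤ p) (i : Fin (p - k)) :
    ((finSumSubEquiv h).symm (Sum.inr i) : ℕ) = k + i := by
  simp [finSumSubEquiv]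

theorem blockX_eq_submatrix (h : k ≤ p) (B : Matrix (Fin k) (Fin k) ℝ)
    (A : Matrix (Fin (p - k)) (Fin k) ℝ) :
    blockX h B A = (fromBlocks B (-Aᵀ) A 0).submatrix (finSumSubEquiv h) (finSumSubEquiv h) :=
  rfl

theorem Ipk_eq_submatrix (h : k ≤ p) :
    Ipk p k = (fromRows (1 : Matrix (Fin k) (Fin k) ℝ) 0).submatrix (finSumSubEquiv h) id := by
  ext i j
  obtain ⟨i | i, rfl⟩ := (finSumSubEquiv h).symm.surjective i
  · simp [Ipk, one_apply, Fin.ext_iff]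
  · have hne : k + (i : ℕ) ≠ j := by omega
    simp [Ipk, hne]

theorem topBlock_submatrix (h : k ≤ p) (M : Matrix (Fin k ⊕ Fin (p - k)) (Fin k) ℝ) :
    topBlock h (M.submatrix (finSumSubEquiv h) id) = M.toRows₁ := by
  ext i j
  have hi : Fin.castLE h i = (finSumSubEquiv h).symm (Sum.inl i) := Fin.ext (by simp)
  simp [topBlock, hi]

theorem botBlock_submatrix (h : k ≤ p) (M : Matrix (Fin k ⊕ Fin (p - k)) (Fin k) ℝ) :
    botBlock h (M.submatrix (finSumSubEquiv h) id) = M.toRows₂ := by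
  ext i j
  have hi : (⟨k + i, by omega⟩ : Fin p) = (finSumSubEquiv h).symm (Sum.inr i) := Fin.ext (by simp)
  simp [botBlock, hi]

end Reindex

theorem cayley_blockX {p k : ℕ} (h : k ≤ p) {B : Matrix (Fin k) (Fin k) ℝ} (hB : Bᵀ = -B)
    (A : Matrix (Fin (p - k)) (Fin k) ℝ) :
    cayley p k (blockX h B A) = (fromRows ((2 : ℝ) • (1 - B + Aᵀ * A)⁻¹ - 1)
      ((2 : ℝ) • (A * (1 - B + Aᵀ * A)⁻¹))).submatrix (finSumSubEquiv h) id := by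
  rw [cayley, blockX_eq_submatrix, Ipk_eq_submatrix h, one_add_submatrix_mul_inv_mul,
    cayley_fromBlocks_fromRows hB]

section Inversion

variable {K n m : Type*} [Field K] [NeZero (2 : K)] [Fintype n] [DecidableEq n] [Fintype m]

theorem cayley_two_smul_inv_sub_one {W : Matrix n n K} (hW : IsUnit W) :
    IsUnit (1 + ((2 : K) • W⁻¹ - 1)) ∧
      (1 - ((2 : K) • W⁻¹ - 1)) * (1 + ((2 : K) • W⁻¹ - 1))⁻¹ = W - 1 := by
  have hWdet := (isUnit_iff_isUnit_det W).mp hW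
  have hadd : 1 + ((2 : K) • W⁻¹ - 1) = (2 : K) • W⁻¹ := add_sub_cancel 1 _
  have hsub : 1 - ((2 : K) • W⁻¹ - 1) = (2 : K) • ((W - 1) * W⁻¹) := by
    rw [sub_mul, mul_nonsing_inv _ hWdet, one_mul]
    module
  have hleft : ((2 : K)⁻¹ • W) * ((2 : K) • W⁻¹) = 1 := by
    rw [Matrix.smul_mul, Matrix.mul_smul, smul_smul, mul_nonsing_inv _ hWdet,
      inv_mul_cancel₀ two_ne_zero, one_smul]
  rw [hadd, hsub, inv_eq_left_inv hleft]
  refine ⟨(isUnit_iff_isUnit_det _).mpr (isUnit_det_of_left_inverse hleft), ?_⟩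
  rw [Matrix.smul_mul, Matrix.mul_smul, smul_smul, Matrix.mul_assoc, nonsing_inv_mul _ hWdet,
    Matrix.mul_one, mul_inv_cancel₀ two_ne_zero, one_smul]

theorem cayley_blocks_recover {B : Matrix n n K} (hB : Bᵀ = -B) {A : Matrix m n K}
    (hW : IsUnit (1 - B + Aᵀ * A)) {Q₁ : Matrix n n K} {Q₂ : Matrix m n K}
    (hQ₁ : Q₁ = (2 : K) • (1 - B + Aᵀ * A)⁻¹ - 1)
    (hQ₂ : Q₂ = (2 : K) • (A * (1 - B + Aᵀ * A)⁻¹)) :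
    IsUnit (1 + Q₁) ∧
      B = (1 / 2 : K) • (((1 - Q₁) * (1 + Q₁)⁻¹)ᵀ - (1 - Q₁) * (1 + Q₁)⁻¹) ∧
      A = (1 / 2 : K) • (Q₂ * (1 + (1 - Q₁) * (1 + Q₁)⁻¹)) := by
  obtain ⟨hunit, hF⟩ := cayley_two_smul_inv_sub_one hW
  subst hQ₁ hQ₂
  refine ⟨hunit, ?_, ?_⟩ <;> rw [hF]
  · have hskew : (1 - B + Aᵀ * A - 1)ᵀ - (1 - B + Aᵀ * A - 1) = (2 : K) • B := by
      simp only [transpose_sub, transpose_add, transpose_one, transpose_mul, transpose_transpose,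
        hB]
      module
    rw [hskew, smul_smul, one_div_mul_cancel two_ne_zero, one_smul]
  · rw [add_sub_cancel, Matrix.smul_mul, Matrix.mul_assoc,
      nonsing_inv_mul _ ((isUnit_iff_isUnit_det _).mp hW), Matrix.mul_one, smul_smul,
      one_div_mul_cancel two_ne_zero, one_smul]

end Inversion

theorem cayley_stiefel_inverse_general (p k : ℕ) (hkp : k < p) :
    (∀ (B : Matrix (Fin k) (Fin k) ℝ) (A : Matrix (Fin (p - k)) (Fin k) ℝ),
      Bᵀ = -B →
      IsUnit (1 + topBlock hkp.le (cayley p k (blockX hkp.le B A))) ∧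
      B = (1 / 2 : ℝ) •
        (((1 - topBlock hkp.le (cayley p k (blockX hkp.le B A))) *
            (1 + topBlock hkp.le (cayley p k (blockX hkp.le B A)))⁻¹)ᵀ -
          (1 - topBlock hkp.le (cayley p k (blockX hkp.le B A))) *
            (1 + topBlock hkp.le (cayley p k (blockX hkp.le B A)))⁻¹) ∧
      A = (1 / 2 : ℝ) • (botBlock hkp.le (cayley p k (blockX hkp.le B A)) *
        (1 + (1 - topBlock hkp.le (cayley p k (blockX hkp.le B A))) *
          (1 + topBlock hkp.le (cayley p k (blockX hkp.le B A)))⁻¹)))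
    ∧ ∀ (B B' : Matrix (Fin k) (Fin k) ℝ)
        (A A' : Matrix (Fin (p - k)) (Fin k) ℝ),
        Bᵀ = -B → B'ᵀ = -B' →
        cayley p k (blockX hkp.le B A) = cayley p k (blockX hkp.le B' A') →
        B = B' ∧ A = A' := by
  have recover (B : Matrix (Fin k) (Fin k) ℝ) (A : Matrix (Fin (p - k)) (Fin k) ℝ)
      (hB : Bᵀ = -B) :=
    cayley_blocks_recover hB (isUnit_one_sub_add_transpose_mul hB A)
      (Q₁ := topBlock hkp.le (cayley p k (blockX hkp.le B A)))
      (Q₂ := botBlock hkp.le (cayley p k (blockX hkp.le B A)))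
      (by rw [cayley_blockX hkp.le hB, topBlock_submatrix, toRows₁_fromRows])
      (by rw [cayley_blockX hkp.le hB, botBlock_submatrix, toRows₂_fromRows])
  refine ⟨recover, fun B B' A A' hB hB' hQ => ?_⟩
  obtain ⟨-, hB₁, hA₁⟩ := recover B A hB
  obtain ⟨-, hB₂, hA₂⟩ := recover B' A' hB'
  rw [hQ] at hB₁ hA₁
  exact ⟨hB₁.trans hB₂.symm, hA₁.trans hA₂.symm⟩

/-- For `B` skew-symmetric and `A` arbitrary, with `X = [[B, -Aᵀ],[A, 0]]` and
`Q = C(X)` having top block `Q₁` and bottom block `Q₂`: `I + Q₁` is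
invertible and, with `F = (I - Q₁)(I + Q₁)⁻¹`, one recovers
`B = ½(Fᵀ - F)` and `A = ½ Q₂ (I + F)`.  In particular the Cayley transform
is injective on block matrices of this form. -/
theorem cayley_stiefel_inverse (p k : ℕ) (hk : 0 < k) (hkp : k < p) :
    (∀ (B : Matrix (Fin k) (Fin k) ℝ) (A : Matrix (Fin (p - k)) (Fin k) ℝ),
      Bᵀ = -B →
      IsUnit (1 + topBlock hkp.le (cayley p k (blockX hkp.le B A))) ∧
      B = (1 / 2 : ℝ) •
        (((1 - topBlock hkp.le (cayley p k (blockX hkp.le B A))) *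
            (1 + topBlock hkp.le (cayley p k (blockX hkp.le B A)))⁻¹)ᵀ -
          (1 - topBlock hkp.le (cayley p k (blockX hkp.le B A))) *
            (1 + topBlock hkp.le (cayley p k (blockX hkp.le B A)))⁻¹) ∧
      A = (1 / 2 : ℝ) • (botBlock hkp.le (cayley p k (blockX hkp.le B A)) *
        (1 + (1 - topBlock hkp.le (cayley p k (blockX hkp.le B A))) *
          (1 + topBlock hkp.le (cayley p k (blockX hkp.le B A)))⁻¹)))
    ∧ ∀ (B B' : Matrix (Fin k) (Fin k) ℝ)
        (A A' : Matrix (Fin (p - k)) (Fin k) ℝ),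
        Bᵀ = -B → B'ᵀ = -B' →
        cayley p k (blockX hkp.le B A) = cayley p k (blockX hkp.le B' A') →
        B = B' ∧ A = A' :=
  cayley_stiefel_inverse_general p k hkp

end
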